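/- Let M = M₁ ×_{f₁,f₂} M₂ be a doubly warped product. A curve α with tangent vector ζ = ζ₁ + ζ₂ is a geodesic of M if and only if D¹_{ζ₁}ζ₁ + 2ζ₂(ln f₂)ζ₁ − (f₁²/f₂²)‖ζ₂‖₂² ∇¹(ln f₁) = 0 and D²_{ζ₂}ζ₂ + 2ζ₁(ln f₁)ζ₂ − (f₂²/f₁²)‖ζ₁‖₁² ∇²(ln f₂) = 0, where ‖ζᵢ‖ᵢ² = gᵢ(ζᵢ,ζᵢ). -/

import Mathlib

noncomputable section

open scoped BigOperators

/-- The model space of an `n`-dimensional manifold (global chart). -/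
abbrev E (n : ℕ) := Fin n → ℝ

section Core
variable {α : Type*} [NormedAddCommGroup α] [NormedSpace ℝ α]

/-- Directional derivative `X(φ)` of a scalar function along a vector field. -/
def dd (X : α → α) (φ : α → ℝ) (p : α) : ℝ := fderiv ℝ φ p (X p)

/-- Lie bracket `[X,Y]` of vector fields. -/
def br (X Y : α → α) (p : α) : α := fderiv ℝ Y p (X p) - fderiv ℝ X p (Y p)

/-- Lie derivative of a metric: `(L_ζ g)(X,Y)(p)`. -/
def lieD (g : α → α → α → ℝ) (ζ X Y : α → α) (p : α) : ℝ :=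
  dd ζ (fun q => g q (X q) (Y q)) p - g p (br ζ X p) (Y p) - g p (X p) (br ζ Y p)

/-- `g` is a smooth field of symmetric bilinear forms. -/
structure IsMetric (g : α → α → α → ℝ) : Prop where
  linL : ∀ p w, IsLinearMap ℝ (fun v => g p v w)
  linR : ∀ p v, IsLinearMap ℝ (g p v)
  symm : ∀ p v w, g p v w = g p w v
  smooth : ∀ v w, ContDiff ℝ (⊤ : ℕ∞) (fun p => g p v w)

/-- Positive definiteness (Riemannian metric). -/
def PosDef (g : α → α → α → ℝ) : Prop := ∀ p v, v ≠ 0 → 0 < g p v v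

/-- `ζ` is a conformal vector field for `g` with conformal factor `ρ`. -/
def IsConformal (g : α → α → α → ℝ) (ζ : α → α) (ρ : α → ℝ) : Prop :=
  ∀ X Y : α → α, ContDiff ℝ (⊤ : ℕ∞) X → ContDiff ℝ (⊤ : ℕ∞) Y → ∀ p,
    lieD g ζ X Y p = ρ p * g p (X p) (Y p)

/-- Conformality restricted to a subset. -/
def IsConformalOn (g : α → α → α → ℝ) (ζ : α → α) (ρ : α → ℝ) (S : Set α) : Prop :=
  ∀ X Y : α → α, ContDiff ℝ (⊤ : ℕ∞) X → ContDiff ℝ (⊤ : ℕ∞) Y → ∀ p ∈ S,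
    lieD g ζ X Y p = ρ p * g p (X p) (Y p)

/-- `ζ` is a Killing vector field for `g`. -/
def IsKilling (g : α → α → α → ℝ) (ζ : α → α) : Prop := IsConformal g ζ (fun _ => 0)

/-- Koszul characterization of the Levi-Civita connection of `g`. -/
def IsLC (g : α → α → α → ℝ) (D : (α → α) → (α → α) → (α → α)) : Prop :=
  ∀ X Y Z : α → α, ContDiff ℝ (⊤ : ℕ∞) X → ContDiff ℝ (⊤ : ℕ∞) Y → ContDiff ℝ (⊤ : ℕ∞) Z → ∀ p,
    2 * g p (D X Y p) (Z p) =
      dd X (fun q => g q (Y q) (Z q)) p + dd Y (fun q => g q (X q) (Z q)) p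
        - dd Z (fun q => g q (X q) (Y q)) p
        + g p (br X Y p) (Z p) - g p (br X Z p) (Y p) - g p (br Y Z p) (X p)

/-- Koszul characterization of the Levi-Civita connection, restricted to a subset. -/
def IsLCOn (g : α → α → α → ℝ) (D : (α → α) → (α → α) → (α → α)) (S : Set α) : Prop :=
  ∀ X Y Z : α → α, ContDiff ℝ (⊤ : ℕ∞) X → ContDiff ℝ (⊤ : ℕ∞) Y → ContDiff ℝ (⊤ : ℕ∞) Z → ∀ p ∈ S,
    2 * g p (D X Y p) (Z p) =
      dd X (fun q => g q (Y q) (Z q)) p + dd Y (fun q => g q (X q) (Z q)) p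
        - dd Z (fun q => g q (X q) (Y q)) p
        + g p (br X Y p) (Z p) - g p (br X Z p) (Y p) - g p (br Y Z p) (X p)

end Core

section Warped
variable {n₁ n₂ : ℕ}

/-- The doubly warped product metric `g = f₂² g₁ ⊕ f₁² g₂` on `M₁ × M₂`. -/
def dwg (g₁ : E n₁ → E n₁ → E n₁ → ℝ) (g₂ : E n₂ → E n₂ → E n₂ → ℝ)
    (f₁ : E n₁ → ℝ) (f₂ : E n₂ → ℝ) :
    (E n₁ × E n₂) → (E n₁ × E n₂) → (E n₁ × E n₂) → ℝ :=
  fun p v w => (f₂ p.2)^2 * g₁ p.1 v.1 w.1 + (f₁ p.1)^2 * g₂ p.2 v.2 w.2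

/-- Lift of a vector field on `M₁` to the product. -/
def lift1 (ζ₁ : E n₁ → E n₁) : (E n₁ × E n₂) → (E n₁ × E n₂) := fun p => (ζ₁ p.1, 0)

/-- Lift of a vector field on `M₂` to the product. -/
def lift2 (ζ₂ : E n₂ → E n₂) : (E n₁ × E n₂) → (E n₁ × E n₂) := fun p => (0, ζ₂ p.2)

/-- The sum `ζ₁ + ζ₂` of lifted vector fields. -/
def sumVF (ζ₁ : E n₁ → E n₁) (ζ₂ : E n₂ → E n₂) : (E n₁ × E n₂) → (E n₁ × E n₂) :=
  fun p => (ζ₁ p.1, ζ₂ p.2)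

end Warped

section AuxLemmas
variable {n : ℕ}

lemma IsMetric.zeroL {g : E n → E n → E n → ℝ} (hg : IsMetric g) (p w : E n) :
    g p 0 w = 0 := (IsLinearMap.mk' _ (hg.linL p w)).map_zero

lemma IsMetric.negL {g : E n → E n → E n → ℝ} (hg : IsMetric g) (p u w : E n) :
    g p (-u) w = - g p u w := (IsLinearMap.mk' _ (hg.linL p w)).map_neg u

lemma IsMetric.subL {g : E n → E n → E n → ℝ} (hg : IsMetric g) (p u v w : E n) :
    g p (u - v) w = g p u w - g p v w := (IsLinearMap.mk' _ (hg.linL p w)).map_sub u v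

lemma IsMetric.expandL {g : E n → E n → E n → ℝ} (hg : IsMetric g) (p : E n)
    (x y z w : E n) (c d : ℝ) :
    g p (x + c • y - d • z) w = g p x w + c * g p y w - d * g p z w := by
  have L := IsLinearMap.mk' _ (hg.linL p w)
  have h1 : g p (x + c • y - d • z) w = (IsLinearMap.mk' _ (hg.linL p w)) (x + c • y - d • z) := rfl
  rw [h1, map_sub, map_add, map_smul, map_smul]
  rfl

lemma vec_expand (v : E n) : v = ∑ i : Fin n, v i • (Pi.single i 1 : E n) := by
  ext j
  simp [Finset.sum_apply, Pi.single_apply]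

lemma metric_expand {g : E n → E n → E n → ℝ} (hg : IsMetric g) (q : E n) (v w : E n) :
    g q v w = ∑ i : Fin n, ∑ j : Fin n, v i * (w j * g q (Pi.single i 1) (Pi.single j 1)) := by
  have hL : ∀ x u : E n, g q x u = ∑ j : Fin n, u j * g q x (Pi.single j 1) := by
    intro x u
    conv_lhs => rw [vec_expand u]
    rw [show g q x (∑ j : Fin n, u j • (Pi.single j 1 : E n))
        = (IsLinearMap.mk' _ (hg.linR q x)) (∑ j : Fin n, u j • (Pi.single j 1 : E n)) from rfl,
      map_sum]
    simp [smul_eq_mul]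
  conv_lhs => rw [vec_expand v]
  rw [show g q (∑ i : Fin n, v i • (Pi.single i 1 : E n)) w
      = (IsLinearMap.mk' _ (hg.linL q w)) (∑ i : Fin n, v i • (Pi.single i 1 : E n)) from rfl,
    map_sum]
  refine Finset.sum_congr rfl fun i _ => ?_
  have : (IsLinearMap.mk' _ (hg.linL q w)) (v i • (Pi.single i 1 : E n))
      = v i * g q (Pi.single i 1) w := by rw [map_smul]; rfl
  rw [this, hL (Pi.single i 1) w]
  rw [Finset.mul_sum]

lemma metric_contDiff {g : E n → E n → E n → ℝ} (hg : IsMetric g)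
    {X Y : E n → E n} (hX : ContDiff ℝ (⊤ : ℕ∞) X) (hY : ContDiff ℝ (⊤ : ℕ∞) Y) :
    ContDiff ℝ (⊤ : ℕ∞) (fun q => g q (X q) (Y q)) := by
  have : (fun q => g q (X q) (Y q))
      = fun q => ∑ i : Fin n, ∑ j : Fin n,
          X q i * (Y q j * g q (Pi.single i 1) (Pi.single j 1)) := by
    funext q; exact metric_expand hg q (X q) (Y q)
  rw [this]
  apply ContDiff.sum; intro i _
  apply ContDiff.sum; intro j _
  have hXi : ContDiff ℝ (⊤ : ℕ∞) (fun q => X q i) :=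
    (ContinuousLinearMap.proj (R := ℝ) (φ := fun _ : Fin n => ℝ) i).contDiff.comp hX
  have hYj : ContDiff ℝ (⊤ : ℕ∞) (fun q => Y q j) :=
    (ContinuousLinearMap.proj (R := ℝ) (φ := fun _ : Fin n => ℝ) j).contDiff.comp hY
  exact hXi.mul (hYj.mul (hg.smooth _ _))

lemma metric_nonneg {g : E n → E n → E n → ℝ} (hg : IsMetric g) (hgp : PosDef g)
    (p w : E n) : 0 ≤ g p w w := by
  rcases eq_or_ne w 0 with rfl | hw
  · rw [hg.zeroL]
  · exact (hgp p w hw).le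

end AuxLemmas

set_option maxHeartbeats 2000000 in
/-- A curve in a doubly warped product with tangent `ζ = ζ₁ + ζ₂` is a
geodesic iff the two stated component equations hold. -/
theorem doubly_warped_geodesic {n₁ n₂ : ℕ}
    (g₁ : E n₁ → E n₁ → E n₁ → ℝ) (g₂ : E n₂ → E n₂ → E n₂ → ℝ)
    (f₁ : E n₁ → ℝ) (f₂ : E n₂ → ℝ)
    (hg₁ : IsMetric g₁) (hg₂ : IsMetric g₂)
    (hg₁p : PosDef g₁) (hg₂p : PosDef g₂)
    (hf₁ : ContDiff ℝ (⊤ : ℕ∞) f₁) (hf₂ : ContDiff ℝ (⊤ : ℕ∞) f₂)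
    (hf₁0 : ∀ q, 0 < f₁ q) (hf₂0 : ∀ q, 0 < f₂ q)
    (D : ((E n₁ × E n₂) → (E n₁ × E n₂)) → ((E n₁ × E n₂) → (E n₁ × E n₂)) →
      ((E n₁ × E n₂) → (E n₁ × E n₂)))
    (D₁ : (E n₁ → E n₁) → (E n₁ → E n₁) → (E n₁ → E n₁))
    (D₂ : (E n₂ → E n₂) → (E n₂ → E n₂) → (E n₂ → E n₂))
    (hD : IsLC (dwg g₁ g₂ f₁ f₂) D) (hD₁ : IsLC g₁ D₁) (hD₂ : IsLC g₂ D₂)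
    (Gl₁ : E n₁ → E n₁)
    (hGl₁ : ∀ q v, g₁ q (Gl₁ q) v = fderiv ℝ (fun r => Real.log (f₁ r)) q v)
    (Gl₂ : E n₂ → E n₂)
    (hGl₂ : ∀ q v, g₂ q (Gl₂ q) v = fderiv ℝ (fun r => Real.log (f₂ r)) q v)
    (ζ₁ : E n₁ → E n₁) (ζ₂ : E n₂ → E n₂)
    (hζ₁ : ContDiff ℝ (⊤ : ℕ∞) ζ₁) (hζ₂ : ContDiff ℝ (⊤ : ℕ∞) ζ₂)
    (α : ℝ → E n₁ × E n₂)
    (hα : ∀ t, HasDerivAt α ((sumVF ζ₁ ζ₂) (α t)) t) :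
    ∀ t : ℝ,
      (D (sumVF ζ₁ ζ₂) (sumVF ζ₁ ζ₂) (α t) = 0 ↔
        (D₁ ζ₁ ζ₁ (α t).1 + (2 * dd ζ₂ (fun q => Real.log (f₂ q)) (α t).2) • ζ₁ (α t).1
            - ((f₁ (α t).1)^2 / (f₂ (α t).2)^2 * g₂ (α t).2 (ζ₂ (α t).2) (ζ₂ (α t).2)) •
              Gl₁ (α t).1 = 0 ∧
         D₂ ζ₂ ζ₂ (α t).2 + (2 * dd ζ₁ (fun q => Real.log (f₁ q)) (α t).1) • ζ₂ (α t).2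
            - ((f₂ (α t).2)^2 / (f₁ (α t).1)^2 * g₁ (α t).1 (ζ₁ (α t).1) (ζ₁ (α t).1)) •
              Gl₂ (α t).2 = 0)) := by
  intro t
  clear hα
  set p : E n₁ × E n₂ := α t with hp
  have hF₁0 : f₁ p.1 ≠ 0 := ne_of_gt (hf₁0 p.1)
  have hF₂0 : f₂ p.2 ≠ 0 := ne_of_gt (hf₂0 p.2)
  have hdF₁ : HasFDerivAt f₁ (fderiv ℝ f₁ p.1) p.1 := ((hf₁.differentiable (by simp)) p.1).hasFDerivAt
  have hdF₂ : HasFDerivAt f₂ (fderiv ℝ f₂ p.2) p.2 := ((hf₂.differentiable (by simp)) p.2).hasFDerivAt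
  have hlog₁ : HasFDerivAt (fun r => Real.log (f₁ r)) ((f₁ p.1)⁻¹ • fderiv ℝ f₁ p.1) p.1 :=
    hdF₁.log hF₁0
  have hlog₂ : HasFDerivAt (fun r => Real.log (f₂ r)) ((f₂ p.2)⁻¹ • fderiv ℝ f₂ p.2) p.2 :=
    hdF₂.log hF₂0
  have hdd₁ : dd ζ₁ (fun q => Real.log (f₁ q)) p.1
      = (f₁ p.1)⁻¹ * fderiv ℝ f₁ p.1 (ζ₁ p.1) := by
    simp [dd, hlog₁.fderiv]
  have hdd₂ : dd ζ₂ (fun q => Real.log (f₂ q)) p.2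
      = (f₂ p.2)⁻¹ * fderiv ℝ f₂ p.2 (ζ₂ p.2) := by
    simp [dd, hlog₂.fderiv]
  have hGlv₁ : ∀ u, g₁ p.1 (Gl₁ p.1) u = (f₁ p.1)⁻¹ * fderiv ℝ f₁ p.1 u := by
    intro u; rw [hGl₁ p.1 u, hlog₁.fderiv]; simp
  have hGlv₂ : ∀ u, g₂ p.2 (Gl₂ p.2) u = (f₂ p.2)⁻¹ * fderiv ℝ f₂ p.2 u := by
    intro u; rw [hGl₂ p.2 u, hlog₂.fderiv]; simp
  have hsq₁ : HasFDerivAt (fun q => f₁ q ^ 2) ((2 * f₁ p.1) • fderiv ℝ f₁ p.1) p.1 := by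
    simpa [pow_two, two_mul, add_smul] using hdF₁.fun_mul hdF₁
  have hsq₂ : HasFDerivAt (fun q => f₂ q ^ 2) ((2 * f₂ p.2) • fderiv ℝ f₂ p.2) p.2 := by
    simpa [pow_two, two_mul, add_smul] using hdF₂.fun_mul hdF₂
  have hdz₁ : HasFDerivAt ζ₁ (fderiv ℝ ζ₁ p.1) p.1 := ((hζ₁.differentiable (by simp)) p.1).hasFDerivAt
  have hdz₂ : HasFDerivAt ζ₂ (fderiv ℝ ζ₂ p.2) p.2 := ((hζ₂.differentiable (by simp)) p.2).hasFDerivAt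
  have hζsm : ContDiff ℝ (⊤ : ℕ∞) (sumVF ζ₁ ζ₂) :=
    ContDiff.prodMk (hζ₁.comp contDiff_fst) (hζ₂.comp contDiff_snd)
  have hζd : HasFDerivAt (sumVF ζ₁ ζ₂)
      (((fderiv ℝ ζ₁ p.1).comp (ContinuousLinearMap.fst ℝ (E n₁) (E n₂))).prod
        ((fderiv ℝ ζ₂ p.2).comp (ContinuousLinearMap.snd ℝ (E n₁) (E n₂)))) p :=
    HasFDerivAt.prodMk (hdz₁.comp p hasFDerivAt_fst) (hdz₂.comp p hasFDerivAt_snd)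
  have hζfd : ∀ u : E n₁ × E n₂, fderiv ℝ (sumVF ζ₁ ζ₂) p u
      = (fderiv ℝ ζ₁ p.1 u.1, fderiv ℝ ζ₂ p.2 u.2) := by
    intro u; rw [hζd.fderiv]; rfl
  have hbr0₁ : br ζ₁ ζ₁ p.1 = 0 := sub_self _
  have hbr0₂ : br ζ₂ ζ₂ p.2 = 0 := sub_self _
  have hbrc₁ : ∀ u : E n₁, br ζ₁ (fun _ => u) p.1 = -(fderiv ℝ ζ₁ p.1 u) := by
    intro u; simp [br]
  have hbrc₂ : ∀ u : E n₂, br ζ₂ (fun _ => u) p.2 = -(fderiv ℝ ζ₂ p.2 u) := by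
    intro u; simp [br]
  -- key identity
  have key : ∀ v : E n₁ × E n₂,
      dwg g₁ g₂ f₁ f₂ p (D (sumVF ζ₁ ζ₂) (sumVF ζ₁ ζ₂) p) v
        = dwg g₁ g₂ f₁ f₂ p
            (D₁ ζ₁ ζ₁ p.1 + (2 * dd ζ₂ (fun q => Real.log (f₂ q)) p.2) • ζ₁ p.1
              - (f₁ p.1 ^ 2 / f₂ p.2 ^ 2 * g₂ p.2 (ζ₂ p.2) (ζ₂ p.2)) • Gl₁ p.1,
             D₂ ζ₂ ζ₂ p.2 + (2 * dd ζ₁ (fun q => Real.log (f₁ q)) p.1) • ζ₂ p.2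
              - (f₂ p.2 ^ 2 / f₁ p.1 ^ 2 * g₁ p.1 (ζ₁ p.1) (ζ₁ p.1)) • Gl₂ p.2) v := by
    intro v
    have hda : HasFDerivAt (fun q => g₁ q (ζ₁ q) v.1)
        (fderiv ℝ (fun q => g₁ q (ζ₁ q) v.1) p.1) p.1 :=
      (((metric_contDiff hg₁ hζ₁ contDiff_const).differentiable (by simp)) p.1).hasFDerivAt
    have hde : HasFDerivAt (fun q => g₁ q (ζ₁ q) (ζ₁ q))
        (fderiv ℝ (fun q => g₁ q (ζ₁ q) (ζ₁ q)) p.1) p.1 :=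
      (((metric_contDiff hg₁ hζ₁ hζ₁).differentiable (by simp)) p.1).hasFDerivAt
    have hdb : HasFDerivAt (fun q => g₂ q (ζ₂ q) v.2)
        (fderiv ℝ (fun q => g₂ q (ζ₂ q) v.2) p.2) p.2 :=
      (((metric_contDiff hg₂ hζ₂ contDiff_const).differentiable (by simp)) p.2).hasFDerivAt
    have hdh : HasFDerivAt (fun q => g₂ q (ζ₂ q) (ζ₂ q))
        (fderiv ℝ (fun q => g₂ q (ζ₂ q) (ζ₂ q)) p.2) p.2 :=
      (((metric_contDiff hg₂ hζ₂ hζ₂).differentiable (by simp)) p.2).hasFDerivAt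
    -- derivative of the big product functions
    have eqA : fderiv ℝ (fun q : E n₁ × E n₂ =>
          f₂ q.2 ^ 2 * g₁ q.1 (ζ₁ q.1) v.1 + f₁ q.1 ^ 2 * g₂ q.2 (ζ₂ q.2) v.2) p (ζ₁ p.1, ζ₂ p.2)
        = f₂ p.2 ^ 2 * fderiv ℝ (fun q => g₁ q (ζ₁ q) v.1) p.1 (ζ₁ p.1)
          + g₁ p.1 (ζ₁ p.1) v.1 * (2 * f₂ p.2 * fderiv ℝ f₂ p.2 (ζ₂ p.2))
          + (f₁ p.1 ^ 2 * fderiv ℝ (fun q => g₂ q (ζ₂ q) v.2) p.2 (ζ₂ p.2)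
            + g₂ p.2 (ζ₂ p.2) v.2 * (2 * f₁ p.1 * fderiv ℝ f₁ p.1 (ζ₁ p.1))) := by
      have hA : HasFDerivAt (fun q : E n₁ × E n₂ =>
          f₂ q.2 ^ 2 * g₁ q.1 (ζ₁ q.1) v.1 + f₁ q.1 ^ 2 * g₂ q.2 (ζ₂ q.2) v.2)
          ((f₂ p.2 ^ 2 • ((fderiv ℝ (fun q => g₁ q (ζ₁ q) v.1) p.1).comp
              (ContinuousLinearMap.fst ℝ (E n₁) (E n₂)))
            + g₁ p.1 (ζ₁ p.1) v.1 • (((2 * f₂ p.2) • fderiv ℝ f₂ p.2).comp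
              (ContinuousLinearMap.snd ℝ (E n₁) (E n₂))))
          + (f₁ p.1 ^ 2 • ((fderiv ℝ (fun q => g₂ q (ζ₂ q) v.2) p.2).comp
              (ContinuousLinearMap.snd ℝ (E n₁) (E n₂)))
            + g₂ p.2 (ζ₂ p.2) v.2 • (((2 * f₁ p.1) • fderiv ℝ f₁ p.1).comp
              (ContinuousLinearMap.fst ℝ (E n₁) (E n₂))))) p :=
        ((hsq₂.comp p hasFDerivAt_snd).mul (hda.comp p hasFDerivAt_fst)).add
          ((hsq₁.comp p hasFDerivAt_fst).mul (hdb.comp p hasFDerivAt_snd))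
      rw [hA.fderiv]
      simp
    have eqB : fderiv ℝ (fun q : E n₁ × E n₂ =>
          f₂ q.2 ^ 2 * g₁ q.1 (ζ₁ q.1) (ζ₁ q.1) + f₁ q.1 ^ 2 * g₂ q.2 (ζ₂ q.2) (ζ₂ q.2)) p v
        = f₂ p.2 ^ 2 * fderiv ℝ (fun q => g₁ q (ζ₁ q) (ζ₁ q)) p.1 v.1
          + g₁ p.1 (ζ₁ p.1) (ζ₁ p.1) * (2 * f₂ p.2 * fderiv ℝ f₂ p.2 v.2)
          + (f₁ p.1 ^ 2 * fderiv ℝ (fun q => g₂ q (ζ₂ q) (ζ₂ q)) p.2 v.2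
            + g₂ p.2 (ζ₂ p.2) (ζ₂ p.2) * (2 * f₁ p.1 * fderiv ℝ f₁ p.1 v.1)) := by
      have hB : HasFDerivAt (fun q : E n₁ × E n₂ =>
          f₂ q.2 ^ 2 * g₁ q.1 (ζ₁ q.1) (ζ₁ q.1) + f₁ q.1 ^ 2 * g₂ q.2 (ζ₂ q.2) (ζ₂ q.2))
          ((f₂ p.2 ^ 2 • ((fderiv ℝ (fun q => g₁ q (ζ₁ q) (ζ₁ q)) p.1).comp
              (ContinuousLinearMap.fst ℝ (E n₁) (E n₂)))
            + g₁ p.1 (ζ₁ p.1) (ζ₁ p.1) • (((2 * f₂ p.2) • fderiv ℝ f₂ p.2).comp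
              (ContinuousLinearMap.snd ℝ (E n₁) (E n₂))))
          + (f₁ p.1 ^ 2 • ((fderiv ℝ (fun q => g₂ q (ζ₂ q) (ζ₂ q)) p.2).comp
              (ContinuousLinearMap.snd ℝ (E n₁) (E n₂)))
            + g₂ p.2 (ζ₂ p.2) (ζ₂ p.2) • (((2 * f₁ p.1) • fderiv ℝ f₁ p.1).comp
              (ContinuousLinearMap.fst ℝ (E n₁) (E n₂))))) p :=
        ((hsq₂.comp p hasFDerivAt_snd).mul (hde.comp p hasFDerivAt_fst)).add
          ((hsq₁.comp p hasFDerivAt_fst).mul (hdh.comp p hasFDerivAt_snd))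
      rw [hB.fderiv]
      simp
    -- Koszul instances
    have hK := hD (sumVF ζ₁ ζ₂) (sumVF ζ₁ ζ₂) (fun _ => v) hζsm hζsm contDiff_const p
    have hK₁ := hD₁ ζ₁ ζ₁ (fun _ => v.1) hζ₁ hζ₁ contDiff_const p.1
    have hK₂ := hD₂ ζ₂ ζ₂ (fun _ => v.2) hζ₂ hζ₂ contDiff_const p.2
    simp only [dd] at hK₁ hK₂
    rw [hbr0₁, hbrc₁ v.1, hg₁.zeroL, hg₁.negL] at hK₁
    rw [hbr0₂, hbrc₂ v.2, hg₂.zeroL, hg₂.negL] at hK₂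
    have hG1 : g₁ p.1 (D₁ ζ₁ ζ₁ p.1) v.1
        = fderiv ℝ (fun q => g₁ q (ζ₁ q) v.1) p.1 (ζ₁ p.1)
          - fderiv ℝ (fun q => g₁ q (ζ₁ q) (ζ₁ q)) p.1 v.1 / 2
          + g₁ p.1 (fderiv ℝ ζ₁ p.1 v.1) (ζ₁ p.1) := by linarith
    have hG2 : g₂ p.2 (D₂ ζ₂ ζ₂ p.2) v.2
        = fderiv ℝ (fun q => g₂ q (ζ₂ q) v.2) p.2 (ζ₂ p.2)
          - fderiv ℝ (fun q => g₂ q (ζ₂ q) (ζ₂ q)) p.2 v.2 / 2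
          + g₂ p.2 (fderiv ℝ ζ₂ p.2 v.2) (ζ₂ p.2) := by linarith
    -- massage hK
    simp only [dd, dwg, sumVF, br] at hK
    simp only [fderiv_fun_const, Pi.zero_apply, ContinuousLinearMap.zero_apply, sub_self,
      zero_sub, Prod.fst_zero, Prod.snd_zero, Prod.fst_neg, Prod.snd_neg] at hK
    rw [hζfd v] at hK
    simp only [Prod.fst_neg, Prod.snd_neg, hg₁.negL, hg₂.negL, hg₁.zeroL, hg₂.zeroL] at hK
    rw [eqA, eqB] at hK
    -- now conclude
    simp only [dwg]
    rw [hg₁.expandL, hg₂.expandL, hGlv₁, hGlv₂, hdd₁, hdd₂, hG1, hG2]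
    refine mul_left_cancel₀ (two_ne_zero) ?_
    rw [hK]
    field_simp
    ring
  -- nondegeneracy
  have hDW : D (sumVF ζ₁ ζ₂) (sumVF ζ₁ ζ₂) p
      = (D₁ ζ₁ ζ₁ p.1 + (2 * dd ζ₂ (fun q => Real.log (f₂ q)) p.2) • ζ₁ p.1
          - (f₁ p.1 ^ 2 / f₂ p.2 ^ 2 * g₂ p.2 (ζ₂ p.2) (ζ₂ p.2)) • Gl₁ p.1,
         D₂ ζ₂ ζ₂ p.2 + (2 * dd ζ₁ (fun q => Real.log (f₁ q)) p.1) • ζ₂ p.2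
          - (f₂ p.2 ^ 2 / f₁ p.1 ^ 2 * g₁ p.1 (ζ₁ p.1) (ζ₁ p.1)) • Gl₂ p.2) := by
    set X := D (sumVF ζ₁ ζ₂) (sumVF ζ₁ ζ₂) p with hX
    set W : E n₁ × E n₂ :=
      (D₁ ζ₁ ζ₁ p.1 + (2 * dd ζ₂ (fun q => Real.log (f₂ q)) p.2) • ζ₁ p.1
          - (f₁ p.1 ^ 2 / f₂ p.2 ^ 2 * g₂ p.2 (ζ₂ p.2) (ζ₂ p.2)) • Gl₁ p.1,
       D₂ ζ₂ ζ₂ p.2 + (2 * dd ζ₁ (fun q => Real.log (f₁ q)) p.1) • ζ₂ p.2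
          - (f₂ p.2 ^ 2 / f₁ p.1 ^ 2 * g₁ p.1 (ζ₁ p.1) (ζ₁ p.1)) • Gl₂ p.2) with hW
    by_contra hne
    have hsub : X - W ≠ 0 := sub_ne_zero.mpr hne
    have hzero : dwg g₁ g₂ f₁ f₂ p (X - W) (X - W) = 0 := by
      have hk := key (X - W)
      simp only [dwg, Prod.fst_sub, Prod.snd_sub] at hk ⊢
      rw [hg₁.subL, hg₂.subL]
      linear_combination hk
    have hpos : 0 < dwg g₁ g₂ f₁ f₂ p (X - W) (X - W) := by
      have h1 : (X - W).1 ≠ 0 ∨ (X - W).2 ≠ 0 := by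
        by_contra hcon
        push_neg at hcon
        exact hsub (Prod.ext hcon.1 hcon.2)
      simp only [dwg]
      rcases h1 with h | h
      · have hpos1 := hg₁p p.1 _ h
        have hnn2 := metric_nonneg hg₂ hg₂p p.2 (X - W).2
        have := mul_pos (pow_pos (hf₂0 p.2) 2) hpos1
        have := mul_nonneg (le_of_lt (pow_pos (hf₁0 p.1) 2)) hnn2
        linarith
      · have hpos2 := hg₂p p.2 _ h
        have hnn1 := metric_nonneg hg₁ hg₁p p.1 (X - W).1
        have := mul_pos (pow_pos (hf₁0 p.1) 2) hpos2
        have := mul_nonneg (le_of_lt (pow_pos (hf₂0 p.2) 2)) hnn1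
        linarith
    exact absurd hzero (ne_of_gt hpos)
  rw [hDW, Prod.mk_eq_zero]
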